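/- arXiv:2604.16118 — 2 statements merged into one kernel-verified Lean document; each statement's English description precedes it below -/
import Mathlib

section
/- Let x ∈ ℝⁿ be nonzero with ⟨u₁,x⟩_A > 0, and assume ρ(x)² ≤ 1/(4·δ·(δ−1)) and sin² ∠_A(u₁,x) ≤ δ/(2δ − 1). Then ‖u₁ − x/‖x‖_A‖_A ≤ 2·sin( (1/2)·arcsin( √(δ·b_δ(ρ(x))) · ρ(x) ) ), where b_δ(ρ) = 2δ / (1 + 2δρ² + √(1 − 4(δ−1)δρ²)); moreover δ·b_δ(ρ(x))·ρ(x)² ≤ 1 so the arcsine argument lies in [0,1]. -/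
open Matrix Real

/-- Euclidean inner product weighted by the matrix `A`: `⟨x,y⟩_A = ⟨Ax,y⟩`. -/
noncomputable def ipA {n : ℕ} (A : Matrix (Fin n) (Fin n) ℝ) (x y : Fin n → ℝ) : ℝ :=
  A.mulVec x ⬝ᵥ y

/-- The `A`-norm `‖x‖_A = √⟨Ax,x⟩`. -/
noncomputable def normA {n : ℕ} (A : Matrix (Fin n) (Fin n) ℝ) (x : Fin n → ℝ) : ℝ :=
  Real.sqrt (ipA A x x)

/-- The `A`-angle `∠_A(u,x) ∈ [0,π]`. -/
noncomputable def angleA {n : ℕ} (A : Matrix (Fin n) (Fin n) ℝ) (u x : Fin n → ℝ) : ℝ :=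
  Real.arccos (ipA A u x / (normA A u * normA A x))

/-- The generalized Rayleigh quotient `λ(x) = ⟨Ax,x⟩/⟨Ex,x⟩`. -/
noncomputable def rayleigh {n : ℕ} (A E : Matrix (Fin n) (Fin n) ℝ) (x : Fin n → ℝ) : ℝ :=
  (A.mulVec x ⬝ᵥ x) / (E.mulVec x ⬝ᵥ x)

/-- The residual `r(x) = Ax − λ(x)·Ex`. -/
noncomputable def residualA {n : ℕ} (A E : Matrix (Fin n) (Fin n) ℝ) (x : Fin n → ℝ) :
    Fin n → ℝ :=
  A.mulVec x - rayleigh A E x • E.mulVec x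

/-- The normalized residual `ρ(x) = ‖r(x)‖_{A⁻¹} / ‖x‖_A`. -/
noncomputable def rhoRes {n : ℕ} (A E : Matrix (Fin n) (Fin n) ℝ) (x : Fin n → ℝ) : ℝ :=
  Real.sqrt (A⁻¹.mulVec (residualA A E x) ⬝ᵥ residualA A E x) / normA A x

/-- The factor `b_δ(ρ) = 2δ / (1 + 2δρ² + √(1 − 4(δ−1)δρ²))`. -/
noncomputable def bdelta (δ ρ : ℝ) : ℝ :=
  2 * δ / (1 + 2 * δ * ρ ^ 2 + Real.sqrt (1 - 4 * (δ - 1) * δ * ρ ^ 2))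

/-!
Normalise `‖x‖_A = 1` and put `c = ⟨u₁, x⟩_A`, `s² = 1 - c² = sin² ∠_A(u₁, x)`. Writing
`x = c u₁ + w` with `w` orthogonal to `u₁` in both the `A`- and the `E`-inner product, the gap
bound `λ₂ ⟨Ew, w⟩ ≤ ⟨Aw, w⟩` together with `δ (λ₂ - λ₁) ≥ λ₂` gives `δ λ₁ ⟨Ex, x⟩ ≤ δ - s²`,
a lower bound for `λ(x)`. Since `r(x) ⊥ x`, Cauchy–Schwarz against `u₁ - c x`, whose `A`-norm
is `s`, gives `⟨r, u₁⟩² ≤ ρ² s²`, while `⟨r, u₁⟩ = c (1 - λ(x)/λ₁)`. Together these yield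
`s² (1 - s²) ≤ ρ² (δ - s²)²`; the angle hypothesis rules out the larger root of this quadratic,
so `s² ≤ δ b_δ(ρ) ρ²`, and `‖u₁ - x‖_A = √(2 - 2c) = 2 sin(½ arcsin s)` is increasing in `s`.
-/

namespace Matrix

variable {ι : Type*} [Fintype ι]

theorem IsHermitian.mulVec_dotProduct_comm {M : Matrix ι ι ℝ} (hM : M.IsHermitian)
    (u v : ι → ℝ) : M *ᵥ u ⬝ᵥ v = M *ᵥ v ⬝ᵥ u := by
  rw [dotProduct_comm, dotProduct_mulVec, ← mulVec_transpose,
    ← conjTranspose_eq_transpose_of_trivial, hM.eq]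

theorem PosSemidef.sq_mulVec_dotProduct_le {M : Matrix ι ι ℝ} (hM : M.PosSemidef)
    (u v : ι → ℝ) : (M *ᵥ u ⬝ᵥ v) ^ 2 ≤ (M *ᵥ u ⬝ᵥ u) * (M *ᵥ v ⬝ᵥ v) := by
  classical
  have h := M.toBilin'.apply_mul_apply_le_of_forall_zero_le
    (fun x ↦ by simpa [toBilin'_apply'] using hM.dotProduct_mulVec_nonneg x) u v
  simp only [toBilin'_apply'] at h
  rwa [dotProduct_comm u, dotProduct_comm v, dotProduct_comm u, dotProduct_comm v,
    hM.isHermitian.mulVec_dotProduct_comm v, ← sq] at h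

theorem PosDef.sq_dotProduct_le [DecidableEq ι] {M : Matrix ι ι ℝ} (hM : M.PosDef)
    (r v : ι → ℝ) : (r ⬝ᵥ v) ^ 2 ≤ (M⁻¹ *ᵥ r ⬝ᵥ r) * (M *ᵥ v ⬝ᵥ v) := by
  have hr : M *ᵥ (M⁻¹ *ᵥ r) = r := by
    rw [mulVec_mulVec, mul_nonsing_inv M ((isUnit_iff_isUnit_det M).mp hM.isUnit), one_mulVec]
  simpa [hr, hM.isHermitian.mulVec_dotProduct_comm (M⁻¹ *ᵥ r) r, dotProduct_comm r]
    using hM.posSemidef.sq_mulVec_dotProduct_le (M⁻¹ *ᵥ r) v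

theorem IsHermitian.mul_dotProduct_self_le_of_forall_eigen [DecidableEq ι]
    {B : Matrix ι ι ℝ} (hB : B.IsHermitian) {c : ℝ} {y : ι → ℝ}
    (hy : ∀ μ v, B *ᵥ v = μ • v → μ < c → v ⬝ᵥ y = 0) :
    c * (y ⬝ᵥ y) ≤ B *ᵥ y ⬝ᵥ y := by
  set b := hB.eigenvectorBasis
  have hb (i : ι) : B *ᵥ ⇑(b i) = hB.eigenvalues i • ⇑(b i) := hB.mulVec_eigenvectorBasis i
  have hexp : y = ∑ i, (⇑(b i) ⬝ᵥ y) • ⇑(b i) := by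
    conv_lhs => rw [← WithLp.ofLp_toLp 2 y, ← b.sum_repr' (WithLp.toLp 2 y)]
    simp [EuclideanSpace.inner_eq_star_dotProduct, dotProduct_comm]
  have hyy : y ⬝ᵥ y = ∑ i, (⇑(b i) ⬝ᵥ y) ^ 2 := by
    nth_rw 1 [hexp]
    simp [sum_dotProduct, sq]
  have hBy : B *ᵥ y ⬝ᵥ y = ∑ i, hB.eigenvalues i * (⇑(b i) ⬝ᵥ y) ^ 2 := by
    nth_rw 1 [hexp]
    simp only [mulVec_sum, mulVec_smul, hb, sum_dotProduct, smul_dotProduct, smul_eq_mul]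
    exact Finset.sum_congr rfl fun i _ ↦ by ring
  rw [hyy, hBy, Finset.mul_sum]
  refine Finset.sum_le_sum fun i _ ↦ ?_
  rcases lt_or_ge (hB.eigenvalues i) c with hi | hi
  · simp [hy _ _ (hb i) hi]
  · exact mul_le_mul_of_nonneg_right hi (sq_nonneg _)

open scoped MatrixOrder in
theorem IsHermitian.mul_mulVec_dotProduct_le_of_forall_eigen [DecidableEq ι]
    {A E : Matrix ι ι ℝ} (hA : A.IsHermitian) (hE : E.PosDef) {c : ℝ} {w : ι → ℝ}
    (hw : ∀ μ v, A *ᵥ v = μ • E *ᵥ v → μ < c → E *ᵥ v ⬝ᵥ w = 0) :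
    c * (E *ᵥ w ⬝ᵥ w) ≤ A *ᵥ w ⬝ᵥ w := by
  -- With `F = E^{1/2}`, the pencil `(A, E)` becomes the symmetric eigenproblem of `F⁻¹ A F⁻¹`.
  set F := CFC.sqrt E
  have hF : F.IsHermitian := (CFC.sqrt_nonneg E).posSemidef.isHermitian
  have hFF : F * F = E := CFC.sqrt_mul_sqrt_self E hE.posSemidef.nonneg
  have hdet : IsUnit F.det :=
    (isUnit_iff_isUnit_det F).mp (isUnit_of_mul_isUnit_left (hFF ▸ hE.isUnit))
  have hFG : F * F⁻¹ = 1 := mul_nonsing_inv F hdet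
  have hGF : F⁻¹ * F = 1 := nonsing_inv_mul F hdet
  have hB : (F⁻¹ * A * F⁻¹).IsHermitian := by
    simpa only [hF.inv.eq] using isHermitian_conjTranspose_mul_mul F⁻¹ hA
  have hEw : E *ᵥ w ⬝ᵥ w = F *ᵥ w ⬝ᵥ F *ᵥ w := by
    rw [hF.mulVec_dotProduct_comm, mulVec_mulVec, hFF]
  have hAw : A *ᵥ w ⬝ᵥ w = (F⁻¹ * A * F⁻¹) *ᵥ (F *ᵥ w) ⬝ᵥ F *ᵥ w := by
    rw [mulVec_mulVec, Matrix.mul_assoc, Matrix.mul_assoc, hGF, Matrix.mul_one,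
      ← mulVec_mulVec, hF.inv.mulVec_dotProduct_comm, mulVec_mulVec, hGF, one_mulVec,
      dotProduct_comm]
  rw [hEw, hAw]
  refine hB.mul_dotProduct_self_le_of_forall_eigen fun μ v hv hμ ↦ ?_
  have hpencil : A *ᵥ (F⁻¹ *ᵥ v) = μ • E *ᵥ (F⁻¹ *ᵥ v) := by
    have := congrArg (F *ᵥ ·) hv
    simp only [mulVec_mulVec, mulVec_smul, ← Matrix.mul_assoc, hFG, Matrix.one_mul] at this
    rw [mulVec_mulVec, this, mulVec_mulVec, ← hFF, Matrix.mul_assoc, hFG, Matrix.mul_one]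
  have := hw μ _ hpencil hμ
  rwa [mulVec_mulVec, ← hFF, Matrix.mul_assoc, hFG, Matrix.mul_one, hF.mulVec_dotProduct_comm,
    dotProduct_comm] at this

theorem IsHermitian.mul_mulVec_dotProduct_le_of_dotProduct_eq_zero [DecidableEq ι]
    {A E : Matrix ι ι ℝ} (hA : A.IsHermitian) (hE : E.PosDef) {lam1 lam2 : ℝ} {u1 : ι → ℝ}
    (hsimple : ∀ v, A *ᵥ v = lam1 • E *ᵥ v → ∃ c : ℝ, v = c • u1)
    (hmin : ∀ μ : ℝ, (∃ v, v ≠ 0 ∧ A *ᵥ v = μ • E *ᵥ v) → μ = lam1 ∨ lam2 ≤ μ)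
    {w : ι → ℝ} (hw : E *ᵥ u1 ⬝ᵥ w = 0) :
    lam2 * (E *ᵥ w ⬝ᵥ w) ≤ A *ᵥ w ⬝ᵥ w := by
  refine hA.mul_mulVec_dotProduct_le_of_forall_eigen hE fun μ v hv hμ ↦ ?_
  rcases eq_or_ne v 0 with rfl | hv0
  · simp
  obtain rfl := (hmin μ ⟨v, hv0, hv⟩).resolve_right hμ.not_ge
  obtain ⟨c, rfl⟩ := hsimple v hv
  simp [mulVec_smul, hw]

end Matrix

theorem two_mul_sin_half_arcsin {g : ℝ} (hg : 0 ≤ g) :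
    2 * sin (2⁻¹ * arcsin g) = √(2 - 2 * √(1 - g ^ 2)) := by
  have h0 : 0 ≤ arcsin g := arcsin_nonneg.2 hg
  have hπ : arcsin g ≤ 2 * π := (arcsin_le_pi_div_two g).trans (by linarith [pi_pos])
  rw [inv_mul_eq_div, sin_half_eq_sqrt h0 hπ, cos_arcsin,
    show (2 : ℝ) = √(2 ^ 2) from (sqrt_sq zero_le_two).symm, ← sqrt_mul (by positivity)]
  congr 1
  ring

theorem mul_bdelta_mul_sq (δ ρ : ℝ) :
    δ * bdelta δ ρ * ρ ^ 2 =
      2 * δ ^ 2 * ρ ^ 2 / (1 + 2 * δ * ρ ^ 2 + √(1 - 4 * (δ - 1) * δ * ρ ^ 2)) := by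
  rw [bdelta]
  ring

theorem mul_bdelta_mul_sq_le_one {δ ρ : ℝ} (hδ : 0 ≤ δ) (hρ : 4 * δ * (δ - 1) * ρ ^ 2 ≤ 1) :
    δ * bdelta δ ρ * ρ ^ 2 ≤ 1 := by
  rw [mul_bdelta_mul_sq, div_le_one (by positivity)]
  nlinarith [sqrt_nonneg (1 - 4 * (δ - 1) * δ * ρ ^ 2), mul_nonneg hδ (sq_nonneg ρ)]

/-- `δ b_δ(ρ) ρ²` is the smaller root of `u (1 - u) = ρ² (δ - u)²`; the constraint
`u (2δ - 1) ≤ δ` keeps `u` below the midpoint of the two roots. -/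
theorem le_mul_bdelta_mul_sq {δ ρ u : ℝ} (hδ : 1 < δ) (hu : 0 ≤ u) (hu_le : u * (2 * δ - 1) ≤ δ)
    (hkey : u * (1 - u) ≤ ρ ^ 2 * (δ - u) ^ 2) :
    u ≤ δ * bdelta δ ρ * ρ ^ 2 := by
  set Δ := 1 - 4 * (δ - 1) * δ * ρ ^ 2
  set G := 1 + 2 * δ * ρ ^ 2 - 2 * (1 + ρ ^ 2) * u
  have hδu : 0 < δ - u := by nlinarith
  have hG : 0 ≤ G := by
    have hG' : 0 ≤ G * (δ - u) ^ 2 := by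
      have : G * (δ - u) ^ 2 = (δ - u) * (δ - u * (2 * δ - 1))
          + 2 * (δ - u) * (ρ ^ 2 * (δ - u) ^ 2 - u * (1 - u)) := by ring
      rw [this]
      exact add_nonneg (mul_nonneg hδu.le (by linarith))
        (mul_nonneg (by linarith) (sub_nonneg.2 hkey))
    exact nonneg_of_mul_nonneg_left hG' (by positivity)
  have hΔG : √Δ ≤ G := by
    rw [sqrt_le_left hG]
    have : G ^ 2 - Δ = 4 * (1 + ρ ^ 2) * (ρ ^ 2 * (δ - u) ^ 2 - u * (1 - u)) := by ring
    linarith [mul_nonneg (by positivity : (0 : ℝ) ≤ 4 * (1 + ρ ^ 2)) (sub_nonneg.2 hkey)]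
  rw [mul_bdelta_mul_sq, le_div_iff₀ (by positivity)]
  have : 2 * δ ^ 2 * ρ ^ 2 - u * (1 + 2 * δ * ρ ^ 2 + G)
      = 2 * (ρ ^ 2 * (δ - u) ^ 2 - u * (1 - u)) := by ring
  linarith [mul_le_mul_of_nonneg_left hΔG hu]

section APosteriori

variable {n : ℕ} {A E : Matrix (Fin n) (Fin n) ℝ}

@[simp]
theorem ipA_smul_left (c : ℝ) (x y : Fin n → ℝ) : ipA A (c • x) y = c * ipA A x y := by
  simp [ipA, mulVec_smul]

@[simp]
theorem ipA_smul_right (c : ℝ) (x y : Fin n → ℝ) : ipA A x (c • y) = c * ipA A x y := by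
  simp [ipA]

theorem normA_smul (c : ℝ) (x : Fin n → ℝ) : normA A (c • x) = |c| * normA A x := by
  rw [normA, normA, ipA_smul_left, ipA_smul_right, ← mul_assoc, sqrt_mul (mul_self_nonneg c),
    sqrt_mul_self_eq_abs]

theorem rayleigh_smul {c : ℝ} (hc : c ≠ 0) (x : Fin n → ℝ) :
    rayleigh A E (c • x) = rayleigh A E x := by
  simp only [rayleigh, mulVec_smul, smul_dotProduct, dotProduct_smul, smul_eq_mul]
  rw [mul_div_mul_left _ _ hc, mul_div_mul_left _ _ hc]

theorem residualA_smul {c : ℝ} (hc : c ≠ 0) (x : Fin n → ℝ) :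
    residualA A E (c • x) = c • residualA A E x := by
  rw [residualA, residualA, rayleigh_smul hc, mulVec_smul, mulVec_smul, smul_comm, smul_sub]

theorem rhoRes_smul {c : ℝ} (hc : c ≠ 0) (x : Fin n → ℝ) :
    rhoRes A E (c • x) = rhoRes A E x := by
  rw [rhoRes, rhoRes, residualA_smul hc, normA_smul, mulVec_smul, smul_dotProduct,
    dotProduct_smul, smul_eq_mul, smul_eq_mul, ← mul_assoc, sqrt_mul (mul_self_nonneg c),
    sqrt_mul_self_eq_abs, mul_div_mul_left _ _ (abs_ne_zero.2 hc)]

theorem angleA_smul_right {c : ℝ} (hc : 0 < c) (u x : Fin n → ℝ) :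
    angleA A u (c • x) = angleA A u x := by
  rw [angleA, angleA, ipA_smul_right, normA_smul, abs_of_pos hc, mul_left_comm,
    mul_div_mul_left _ _ hc.ne']

theorem residualA_dotProduct_self {x : Fin n → ℝ} (hx : E *ᵥ x ⬝ᵥ x ≠ 0) :
    residualA A E x ⬝ᵥ x = 0 := by
  rw [residualA, sub_dotProduct, smul_dotProduct, rayleigh, smul_eq_mul, div_mul_cancel₀ _ hx,
    sub_self]

theorem ipA_self_of_normA_eq_one {x : Fin n → ℝ} (hx : normA A x = 1) : ipA A x x = 1 :=
  sqrt_eq_one.1 hx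

theorem sin_angleA_sq (hA : A.PosSemidef) {u x : Fin n → ℝ} (hu : normA A u = 1)
    (hx : normA A x = 1) : sin (angleA A u x) ^ 2 = 1 - ipA A u x ^ 2 := by
  have hcs := hA.sq_mulVec_dotProduct_le u x
  rw [← ipA, ← ipA, ← ipA, ipA_self_of_normA_eq_one hu, ipA_self_of_normA_eq_one hx] at hcs
  rw [angleA, hu, hx, mul_one, div_one, sin_arccos, sq_sqrt (by linarith)]

theorem normA_sub_le_two_mul_sin_half_arcsin (hA : A.IsHermitian) {u x : Fin n → ℝ}
    (hu : ipA A u u = 1) (hx : ipA A x x = 1) (hc : 0 ≤ ipA A u x) {g : ℝ} (hg : 0 ≤ g)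
    (hug : 1 - ipA A u x ^ 2 ≤ g ^ 2) :
    normA A (u - x) ≤ 2 * sin (2⁻¹ * arcsin g) := by
  have hxu : ipA A x u = ipA A u x := hA.mulVec_dotProduct_comm x u
  have hsub : ipA A (u - x) (u - x) = 2 - 2 * ipA A u x := by
    simp only [ipA, mulVec_sub, sub_dotProduct, dotProduct_sub] at hu hx hxu ⊢
    linarith
  rw [two_mul_sin_half_arcsin hg, normA, hsub]
  gcongr
  rw [sqrt_le_left hc]
  linarith

variable {lam1 lam2 δ : ℝ} {u1 x : Fin n → ℝ}

theorem mul_lam1_mul_dotProduct_le (hA : A.IsHermitian) (hE : E.PosSemidef) (h1pos : 0 < lam1)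
    (hu1 : A *ᵥ u1 = lam1 • E *ᵥ u1) (hu1norm : ipA A u1 u1 = 1)
    (hgap : ∀ w, E *ᵥ u1 ⬝ᵥ w = 0 → lam2 * (E *ᵥ w ⬝ᵥ w) ≤ A *ᵥ w ⬝ᵥ w)
    (hδ : lam2 ≤ δ * (lam2 - lam1)) (hδ1 : 1 ≤ δ) (hx : ipA A x x = 1) :
    δ * (lam1 * (E *ᵥ x ⬝ᵥ x)) ≤ δ - (1 - ipA A u1 x ^ 2) := by
  unfold ipA at hu1norm hx ⊢
  set c := A *ᵥ u1 ⬝ᵥ x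
  set w := x - c • u1
  have hxw : x = w + c • u1 := by simp [w]
  have hEu1 : E *ᵥ u1 = lam1⁻¹ • A *ᵥ u1 := by
    rw [hu1, smul_smul, inv_mul_cancel₀ h1pos.ne', one_smul]
  have hAu1w : A *ᵥ u1 ⬝ᵥ w = 0 := by
    simp only [w, dotProduct_sub, dotProduct_smul, smul_eq_mul, hu1norm]
    ring
  have hEu1w : E *ᵥ u1 ⬝ᵥ w = 0 := by rw [hEu1, smul_dotProduct, hAu1w, smul_zero]
  have hAw : A *ᵥ w ⬝ᵥ w = 1 - c ^ 2 := by
    have hwu1 := hA.mulVec_dotProduct_comm w u1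
    rw [hxw] at hx
    simp only [mulVec_add, mulVec_smul, add_dotProduct, dotProduct_add, smul_dotProduct,
      dotProduct_smul, smul_eq_mul, hAu1w, hwu1] at hx hu1norm
    linear_combination hx - c ^ 2 * hu1norm
  have hEx : lam1 * (E *ᵥ x ⬝ᵥ x) = c ^ 2 + lam1 * (E *ᵥ w ⬝ᵥ w) := by
    have hwu1 := hE.isHermitian.mulVec_dotProduct_comm w u1
    have hEu1u1 : lam1 * (E *ᵥ u1 ⬝ᵥ u1) = 1 := by
      rw [hEu1, smul_dotProduct, hu1norm, smul_eq_mul, mul_one, mul_inv_cancel₀ h1pos.ne']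
    rw [hxw]
    simp only [mulVec_add, mulVec_smul, add_dotProduct, dotProduct_add, smul_dotProduct,
      dotProduct_smul, smul_eq_mul, hEu1w, hwu1]
    linear_combination c ^ 2 * hEu1u1
  have he : 0 ≤ E *ᵥ w ⬝ᵥ w := by
    simpa [dotProduct_comm] using hE.dotProduct_mulVec_nonneg w
  have hlam2 := hgap w hEu1w
  rw [hAw] at hlam2
  have hδlam : δ * lam1 ≤ (δ - 1) * lam2 := by linarith
  rw [hEx]
  linarith [mul_le_mul_of_nonneg_right hδlam he, mul_le_mul_of_nonneg_left hlam2 (sub_nonneg.2 hδ1)]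

theorem residualA_dotProduct_mul (hA : A.IsHermitian) (hE : E.IsHermitian) (h1 : lam1 ≠ 0)
    (hu1 : A *ᵥ u1 = lam1 • E *ᵥ u1) (hx : ipA A x x = 1) (hq : E *ᵥ x ⬝ᵥ x ≠ 0) :
    residualA A E x ⬝ᵥ u1 * (lam1 * (E *ᵥ x ⬝ᵥ x)) =
      ipA A u1 x * (lam1 * (E *ᵥ x ⬝ᵥ x) - 1) := by
  have hExu1 : lam1 * (E *ᵥ x ⬝ᵥ u1) = ipA A u1 x := by
    rw [hE.mulVec_dotProduct_comm, ← smul_eq_mul, ← smul_dotProduct, ← hu1, ipA]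
  unfold ipA at hx hExu1 ⊢
  rw [residualA, rayleigh, hx, sub_dotProduct, smul_dotProduct, smul_eq_mul,
    hA.mulVec_dotProduct_comm x u1, ← hExu1]
  field_simp

theorem sq_residualA_dotProduct_le (hA : A.PosDef) (hu1norm : ipA A u1 u1 = 1)
    (hx : ipA A x x = 1) (hq : E *ᵥ x ⬝ᵥ x ≠ 0) :
    (residualA A E x ⬝ᵥ u1) ^ 2 ≤ rhoRes A E x ^ 2 * (1 - ipA A u1 x ^ 2) := by
  set r := residualA A E x
  have hrx : r ⬝ᵥ x = 0 := residualA_dotProduct_self hq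
  have hrho : rhoRes A E x ^ 2 = A⁻¹ *ᵥ r ⬝ᵥ r := by
    rw [rhoRes, normA, hx, sqrt_one, div_one, sq_sqrt]
    simpa [dotProduct_comm] using hA.inv.posSemidef.dotProduct_mulVec_nonneg r
  have hxu1 := hA.isHermitian.mulVec_dotProduct_comm x u1
  unfold ipA at hu1norm hx ⊢
  have hcs := hA.sq_dotProduct_le r (u1 - (A *ᵥ u1 ⬝ᵥ x) • x)
  simp only [dotProduct_sub, dotProduct_smul, smul_eq_mul, hrx, mul_zero, sub_zero, mulVec_sub,
    mulVec_smul, sub_dotProduct, smul_dotProduct, hu1norm, hx, hxu1] at hcs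
  rw [hrho]
  convert hcs using 2
  ring

theorem one_sub_sq_mul_sq_le (hA : A.PosDef) (hE : E.PosDef) (h1pos : 0 < lam1)
    (hu1 : A *ᵥ u1 = lam1 • E *ᵥ u1) (hu1norm : ipA A u1 u1 = 1)
    (hgap : ∀ w, E *ᵥ u1 ⬝ᵥ w = 0 → lam2 * (E *ᵥ w ⬝ᵥ w) ≤ A *ᵥ w ⬝ᵥ w)
    (hδ : lam2 ≤ δ * (lam2 - lam1)) (hδ1 : 1 ≤ δ) (hx : ipA A x x = 1) :
    (1 - ipA A u1 x ^ 2) * ipA A u1 x ^ 2 ≤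
      rhoRes A E x ^ 2 * (δ - (1 - ipA A u1 x ^ 2)) ^ 2 := by
  have hx0 : x ≠ 0 := by
    rintro rfl
    simp [ipA] at hx
  have hq : 0 < E *ᵥ x ⬝ᵥ x := by simpa [dotProduct_comm] using hE.dotProduct_mulVec_pos hx0
  have hlow := mul_lam1_mul_dotProduct_le hA.isHermitian hE.posSemidef h1pos hu1 hu1norm hgap
    hδ hδ1 hx
  have hr := residualA_dotProduct_mul hA.isHermitian hE.isHermitian h1pos.ne' hu1 hx hq.ne'
  have hcs := sq_residualA_dotProduct_le (E := E) hA hu1norm hx hq.ne'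
  set c := ipA A u1 x
  set s := 1 - c ^ 2
  set t := lam1 * (E *ᵥ x ⬝ᵥ x)
  set ρ := rhoRes A E x
  have ht : 0 < t := mul_pos h1pos hq
  rcases le_or_gt s 0 with hs | hs
  · exact (mul_nonpos_of_nonpos_of_nonneg hs (sq_nonneg c)).trans (by positivity)
  refine le_of_mul_le_mul_left ?_ hs
  calc s * (s * c ^ 2) = s ^ 2 * c ^ 2 := by ring
    _ ≤ (δ * (1 - t)) ^ 2 * c ^ 2 := by gcongr; linarith
    _ = δ ^ 2 * t ^ 2 * (residualA A E x ⬝ᵥ u1) ^ 2 := by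
      linear_combination (-(δ ^ 2) * (residualA A E x ⬝ᵥ u1 * t + c * (t - 1))) * hr
    _ ≤ δ ^ 2 * t ^ 2 * (ρ ^ 2 * s) := by gcongr
    _ = (δ * t) ^ 2 * ρ ^ 2 * s := by ring
    _ ≤ (δ - s) ^ 2 * ρ ^ 2 * s := by gcongr
    _ = s * (ρ ^ 2 * (δ - s) ^ 2) := by ring

theorem a_posteriori_bound_of_normA_eq_one (hA : A.PosDef) (hE : E.PosDef) (h1pos : 0 < lam1)
    (hu1 : A *ᵥ u1 = lam1 • E *ᵥ u1) (hu1norm : normA A u1 = 1)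
    (hgap : ∀ w, E *ᵥ u1 ⬝ᵥ w = 0 → lam2 * (E *ᵥ w ⬝ᵥ w) ≤ A *ᵥ w ⬝ᵥ w)
    (hδ : lam2 ≤ δ * (lam2 - lam1)) (hδ1 : 1 < δ) (hx : normA A x = 1)
    (hor : 0 < ipA A u1 x) (hrho : rhoRes A E x ^ 2 ≤ 1 / (4 * δ * (δ - 1)))
    (hsin : sin (angleA A u1 x) ^ 2 ≤ δ / (2 * δ - 1)) :
    δ * bdelta δ (rhoRes A E x) * rhoRes A E x ^ 2 ≤ 1 ∧
      normA A (u1 - x) ≤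
        2 * sin (2⁻¹ * arcsin (√(δ * bdelta δ (rhoRes A E x)) * rhoRes A E x)) := by
  set ρ := rhoRes A E x
  have hρ0 : 0 ≤ ρ := div_nonneg (sqrt_nonneg _) (sqrt_nonneg _)
  have hρ : 4 * δ * (δ - 1) * ρ ^ 2 ≤ 1 := by
    rw [le_div_iff₀ (by nlinarith)] at hrho
    linarith
  have hsin_sq := sin_angleA_sq hA.posSemidef hu1norm hx
  have hu : 0 ≤ 1 - ipA A u1 x ^ 2 := hsin_sq ▸ sq_nonneg _
  rw [hsin_sq, le_div_iff₀ (by linarith)] at hsin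
  have hkey : (1 - ipA A u1 x ^ 2) * (1 - (1 - ipA A u1 x ^ 2)) ≤
      ρ ^ 2 * (δ - (1 - ipA A u1 x ^ 2)) ^ 2 := by
    rw [sub_sub_cancel]
    exact one_sub_sq_mul_sq_le hA hE h1pos hu1 (ipA_self_of_normA_eq_one hu1norm) hgap hδ
      hδ1.le (ipA_self_of_normA_eq_one hx)
  have hle := le_mul_bdelta_mul_sq hδ1 hu hsin hkey
  have hb : 0 ≤ δ * bdelta δ ρ :=
    mul_nonneg (by linarith) (div_nonneg (by linarith) (by positivity))
  refine ⟨mul_bdelta_mul_sq_le_one (by linarith) hρ, ?_⟩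
  refine normA_sub_le_two_mul_sin_half_arcsin hA.isHermitian (ipA_self_of_normA_eq_one hu1norm)
    (ipA_self_of_normA_eq_one hx) hor.le (by positivity) ?_
  rwa [mul_pow, sq_sqrt hb]

end APosteriori

theorem a_posteriori_eigenvector_error_bound_general
    {n : ℕ}
    (A E : Matrix (Fin n) (Fin n) ℝ) (hA : A.PosDef) (hE : E.PosDef)
    (lam1 lam2 : ℝ) (u1 : Fin n → ℝ)
    (hu1 : A.mulVec u1 = lam1 • E.mulVec u1) (hu1norm : normA A u1 = 1)
    (h1pos : 0 < lam1) (h12 : lam1 < lam2)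
    (hsimple : ∀ v : Fin n → ℝ, A.mulVec v = lam1 • E.mulVec v → ∃ c : ℝ, v = c • u1)
    (hmin : ∀ μ : ℝ, (∃ v : Fin n → ℝ, v ≠ 0 ∧ A.mulVec v = μ • E.mulVec v) →
      μ = lam1 ∨ lam2 ≤ μ)
    (δ : ℝ) (hδ : δ ≥ lam2 / (lam2 - lam1))
    (x : Fin n → ℝ) (hx : x ≠ 0) (hor : 0 < ipA A u1 x)
    (hrho : rhoRes A E x ^ 2 ≤ 1 / (4 * δ * (δ - 1)))
    (hsin : Real.sin (angleA A u1 x) ^ 2 ≤ δ / (2 * δ - 1)) :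
    δ * bdelta δ (rhoRes A E x) * rhoRes A E x ^ 2 ≤ 1 ∧
      normA A (u1 - (normA A x)⁻¹ • x) ≤
        2 * Real.sin (2⁻¹ *
          Real.arcsin (Real.sqrt (δ * bdelta δ (rhoRes A E x)) * rhoRes A E x)) := by
  have hgap : 0 < lam2 - lam1 := sub_pos.2 h12
  have hδ' : lam2 ≤ δ * (lam2 - lam1) := (div_le_iff₀ hgap).1 hδ
  have hδ1 : 1 < δ := ((one_lt_div hgap).2 (by linarith)).trans_le hδ
  have hk : 0 < normA A x :=
    sqrt_pos.2 (by simpa [ipA, dotProduct_comm] using hA.dotProduct_mulVec_pos hx)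
  rw [← rhoRes_smul (inv_ne_zero hk.ne') x] at hrho ⊢
  rw [← angleA_smul_right (inv_pos.2 hk)] at hsin
  refine a_posteriori_bound_of_normA_eq_one hA hE h1pos hu1 hu1norm
    (fun w hw ↦ hA.isHermitian.mul_mulVec_dotProduct_le_of_dotProduct_eq_zero hE hsimple hmin hw)
    hδ' hδ1 ?_ ?_ hrho hsin
  · rw [normA_smul, abs_inv, abs_of_pos hk, inv_mul_cancel₀ hk.ne']
  · rw [ipA_smul_right]
    positivity

/-- Theorem `aposterbound`: a posteriori error bound for the normalized approximate
eigenvector in the `A`-norm. -/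
theorem a_posteriori_eigenvector_error_bound
    {n : ℕ} (hn : 1 ≤ n)
    (A E : Matrix (Fin n) (Fin n) ℝ) (hA : A.PosDef) (hE : E.PosDef)
    (lam1 lam2 : ℝ) (u1 : Fin n → ℝ)
    (hu1 : A.mulVec u1 = lam1 • E.mulVec u1) (hu1ne : u1 ≠ 0) (hu1norm : normA A u1 = 1)
    (h1pos : 0 < lam1) (h12 : lam1 < lam2)
    (hsimple : ∀ v : Fin n → ℝ, A.mulVec v = lam1 • E.mulVec v → ∃ c : ℝ, v = c • u1)
    (hlam2 : ∃ v : Fin n → ℝ, v ≠ 0 ∧ A.mulVec v = lam2 • E.mulVec v)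
    (hmin : ∀ μ : ℝ, (∃ v : Fin n → ℝ, v ≠ 0 ∧ A.mulVec v = μ • E.mulVec v) →
      μ = lam1 ∨ lam2 ≤ μ)
    (δ : ℝ) (hδ : δ ≥ lam2 / (lam2 - lam1))
    (x : Fin n → ℝ) (hx : x ≠ 0) (hor : 0 < ipA A u1 x)
    (hrho : rhoRes A E x ^ 2 ≤ 1 / (4 * δ * (δ - 1)))
    (hsin : Real.sin (angleA A u1 x) ^ 2 ≤ δ / (2 * δ - 1)) :
    δ * bdelta δ (rhoRes A E x) * rhoRes A E x ^ 2 ≤ 1 ∧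
      normA A (u1 - (normA A x)⁻¹ • x) ≤
        2 * Real.sin (2⁻¹ *
          Real.arcsin (Real.sqrt (δ * bdelta δ (rhoRes A E x)) * rhoRes A E x)) :=
  a_posteriori_eigenvector_error_bound_general A E hA hE lam1 lam2 u1 hu1 hu1norm h1pos h12 hsimple
    hmin δ hδ x hx hor hrho hsin
end

section
/- Let x ∈ ℝⁿ be nonzero and assume λ₁/λ(x) ≥ 1 − 1/(2δ²). Then λ(x) < λ₂. If in addition u ≥ 1, ν = 1/(4u²δ − 1), and y ∈ ℝⁿ is nonzero with ⟨u₁,y⟩_A > 0, λ(y) < λ₂, and (λ(y) − λ₁)/(λ₂ − λ(y)) ≤ ν·(λ(x) − λ₁)/(λ₂ − λ(x)), then ‖u₁ − y/‖y‖_A‖_A ≤ (1/u)·sin ∠_A(u₁,x). -/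
open Matrix Real

/-!
Write `y = p u₁ + w` with `p = ⟨u₁, y⟩_A` and `w` `A`-orthogonal to `u₁`. As `λ₁` is simple and
every other eigenvalue is at least `λ₂`, `‖w‖²_A ≥ λ₂ ‖w‖²_E`, which gives
`tan² ∠_A(u₁, y) ≤ (λ₂/λ₁) (λ(y) − λ₁)/(λ₂ − λ(y))`; the same decomposition of `x` gives
`cos² ∠_A(u₁, x) ≤ λ₁/λ(x)`. The hypothesis on `λ(x)` together with `λ₁ ≤ (1 − 1/δ) λ₂` gives
`λ(x) < λ₂` and `(λ₂/λ₁) λ(x)/(λ₂ − λ(x)) ≤ 2δ²/(2δ − 1)`, so that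
`tan² ∠_A(u₁, y) ≤ ν 2δ²/(2δ − 1) sin² ∠_A(u₁, x) ≤ sin² ∠_A(u₁, x)/u²`.
Finally `‖u₁ − y/‖y‖_A‖²_A = 2 − 2 cos ∠_A(u₁, y) ≤ tan² ∠_A(u₁, y)`.
-/

theorem one_lt_of_div_sub_le {a b δ : ℝ} (ha : 0 < a) (hab : a < b) (hδ : b / (b - a) ≤ δ) :
    1 < δ :=
  ((one_lt_div (sub_pos.2 hab)).2 (by linarith : b - a < b)).trans_le hδ

theorem lt_and_mul_div_le_of_one_sub_le_div {lam1 lam2 δ l : ℝ} (h1 : 0 < lam1)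
    (h12 : lam1 < lam2) (hδ : lam2 / (lam2 - lam1) ≤ δ) (hl : 0 < l)
    (hrq : 1 - 1 / (2 * δ ^ 2) ≤ lam1 / l) :
    l < lam2 ∧ lam2 / lam1 * (l / (lam2 - l)) ≤ 2 * δ ^ 2 / (2 * δ - 1) := by
  have hδ1 := one_lt_of_div_sub_le h1 h12 hδ
  have hgap : δ * lam1 ≤ (δ - 1) * lam2 := by
    rw [div_le_iff₀ (sub_pos.2 h12)] at hδ
    linarith
  have hl' : (2 * δ ^ 2 - 1) * l ≤ 2 * δ ^ 2 * lam1 := by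
    rw [le_div_iff₀ hl] at hrq
    field_simp at hrq
    linarith
  have key : (2 * δ - 1) * lam2 * l ≤ 2 * δ ^ 2 * lam1 * (lam2 - l) := by
    nlinarith [mul_le_mul_of_nonneg_left hl' (h1.trans h12).le,
      mul_le_mul_of_nonneg_left hgap (by positivity : 0 ≤ 2 * δ * l)]
  have hgap_pos : 0 < lam2 - l := by
    have hlhs : 0 < (2 * δ - 1) * lam2 * l := by
      have := h1.trans h12
      have : 0 < 2 * δ - 1 := by linarith
      positivity
    exact pos_of_mul_pos_right (hlhs.trans_le key) (by positivity)
  refine ⟨sub_pos.1 hgap_pos, ?_⟩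
  rw [div_mul_div_comm, div_le_div_iff₀ (by positivity) (by linarith)]
  linarith

theorem div_mul_div_le_mul_one_sub_sq {lam1 lam2 δ l c : ℝ} (h1 : 0 < lam1) (h12 : lam1 < lam2)
    (hδ : lam2 / (lam2 - lam1) ≤ δ) (hl : 0 < l) (hrq : 1 - 1 / (2 * δ ^ 2) ≤ lam1 / l)
    (hc : c ^ 2 ≤ lam1 / l) (hc1 : c ^ 2 ≤ 1) :
    lam2 / lam1 * ((l - lam1) / (lam2 - l)) ≤ 2 * δ ^ 2 / (2 * δ - 1) * (1 - c ^ 2) := by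
  obtain ⟨hl2, hratio⟩ := lt_and_mul_div_le_of_one_sub_le_div h1 h12 hδ hl hrq
  have hsplit : lam2 / lam1 * ((l - lam1) / (lam2 - l)) =
      (1 - lam1 / l) * (lam2 / lam1 * (l / (lam2 - l))) := by
    field_simp
  have hnonneg : 0 ≤ lam2 / lam1 * (l / (lam2 - l)) :=
    mul_nonneg (div_pos (h1.trans h12) h1).le (div_pos hl (sub_pos.2 hl2)).le
  rw [hsplit, mul_comm _ (1 - c ^ 2)]
  gcongr

theorem two_sub_two_mul_le_one_sub_sq_div_sq {c : ℝ} (hc : 0 < c) :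
    2 - 2 * c ≤ (1 - c ^ 2) / c ^ 2 := by
  rw [le_div_iff₀ (by positivity)]
  nlinarith [mul_nonneg (mul_self_nonneg (1 - c)) (by linarith : 0 ≤ 1 + 2 * c)]

theorem mul_one_div_le_one_div_sq {δ u : ℝ} (hδ : 1 ≤ δ) (hu : 1 ≤ u) :
    2 * δ ^ 2 / (2 * δ - 1) * (1 / (4 * u ^ 2 * δ - 1)) ≤ 1 / u ^ 2 := by
  have hu2 : 1 ≤ u ^ 2 := one_le_pow₀ hu
  rw [div_mul_div_comm, mul_one,
    div_le_div_iff₀ (mul_pos (by linarith) (by nlinarith)) (by positivity)]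
  nlinarith [mul_nonneg (sub_nonneg.2 hu2) (by nlinarith : (0 : ℝ) ≤ 2 * δ * (3 * δ - 2))]

theorem sqrt_two_sub_two_mul_le {lam1 lam2 δ u qx qy cx cy : ℝ} (h1 : 0 < lam1)
    (h12 : lam1 < lam2) (hδ : 1 ≤ δ) (hu : 1 ≤ u) (hcy : 0 < cy) (hcx : cx ^ 2 ≤ 1)
    (hy : (1 - cy ^ 2) / cy ^ 2 ≤ lam2 / lam1 * qy) (hq : qy ≤ 1 / (4 * u ^ 2 * δ - 1) * qx)
    (hx : lam2 / lam1 * qx ≤ 2 * δ ^ 2 / (2 * δ - 1) * (1 - cx ^ 2)) :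
    √(2 - 2 * cy) ≤ 1 / u * √(1 - cx ^ 2) := by
  have hu0 : 0 < u := by linarith
  have hν : 0 ≤ 1 / (4 * u ^ 2 * δ - 1) := one_div_nonneg.2 (by nlinarith [one_le_pow₀ hu (n := 2)])
  have hratio : 0 ≤ lam2 / lam1 := (div_pos (h1.trans h12) h1).le
  have hbound : 2 - 2 * cy ≤ (1 - cx ^ 2) / u ^ 2 :=
    calc 2 - 2 * cy ≤ (1 - cy ^ 2) / cy ^ 2 := two_sub_two_mul_le_one_sub_sq_div_sq hcy
      _ ≤ lam2 / lam1 * (1 / (4 * u ^ 2 * δ - 1) * qx) := hy.trans (by gcongr)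
      _ = 1 / (4 * u ^ 2 * δ - 1) * (lam2 / lam1 * qx) := mul_left_comm ..
      _ ≤ 1 / (4 * u ^ 2 * δ - 1) * (2 * δ ^ 2 / (2 * δ - 1) * (1 - cx ^ 2)) := by gcongr
      _ ≤ 1 / u ^ 2 * (1 - cx ^ 2) := by
        rw [← mul_assoc, mul_comm (1 / _)]
        exact mul_le_mul_of_nonneg_right (mul_one_div_le_one_div_sq hδ hu) (sub_nonneg.2 hcx)
      _ = (1 - cx ^ 2) / u ^ 2 := one_div_mul_eq_div ..
  calc √(2 - 2 * cy) ≤ √((1 - cx ^ 2) / u ^ 2) := sqrt_le_sqrt hbound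
    _ = 1 / u * √(1 - cx ^ 2) := by
      rw [sqrt_div' _ (by positivity), sqrt_sq hu0.le, one_div_mul_eq_div]

theorem Matrix.IsHermitian.mulVec_dotProduct {ι : Type*} [Fintype ι] {S : Matrix ι ι ℝ}
    (hS : S.IsHermitian) (a b : ι → ℝ) : S *ᵥ a ⬝ᵥ b = a ⬝ᵥ S *ᵥ b := by
  rw [dotProduct_mulVec, ← mulVec_transpose, ← conjTranspose_eq_transpose_of_trivial, hS]

theorem Matrix.IsHermitian.mul_dotProduct_self_le {ι : Type*} [Fintype ι] [DecidableEq ι]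
    {S : Matrix ι ι ℝ} (hS : S.IsHermitian) {c : ℝ} {v : ι → ℝ}
    (hv : ∀ μ w, S *ᵥ w = μ • w → μ < c → w ⬝ᵥ v = 0) :
    c * (v ⬝ᵥ v) ≤ S *ᵥ v ⬝ᵥ v := by
  have expand (w : ι → ℝ) :
      v ⬝ᵥ w = ∑ i, (hS.eigenvectorBasis i ⬝ᵥ v) * (hS.eigenvectorBasis i ⬝ᵥ w) := by
    simpa [EuclideanSpace.inner_eq_star_dotProduct, dotProduct_comm] using
      (hS.eigenvectorBasis.sum_inner_mul_inner (WithLp.toLp 2 v) (WithLp.toLp 2 w)).symm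
  have coeff (i : ι) :
      hS.eigenvectorBasis i ⬝ᵥ S *ᵥ v = hS.eigenvalues i * (hS.eigenvectorBasis i ⬝ᵥ v) := by
    rw [← hS.mulVec_dotProduct, hS.mulVec_eigenvectorBasis, smul_dotProduct, smul_eq_mul]
  rw [dotProduct_comm (S *ᵥ v), expand, expand, Finset.mul_sum]
  refine Finset.sum_le_sum fun i _ => ?_
  rw [coeff]
  by_cases h : hS.eigenvalues i < c
  · simp [hv _ _ (hS.mulVec_eigenvectorBasis i) h]
  · nlinarith [mul_self_nonneg (hS.eigenvectorBasis i ⬝ᵥ v)]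

open scoped MatrixOrder in
theorem Matrix.IsHermitian.mul_dotProduct_mulVec_le_of_posDef {ι : Type*} [Fintype ι]
    [DecidableEq ι] {A E : Matrix ι ι ℝ} (hA : A.IsHermitian) (hE : E.PosDef) {c : ℝ}
    {z : ι → ℝ} (hz : ∀ μ v, A *ᵥ v = μ • E *ᵥ v → μ < c → E *ᵥ v ⬝ᵥ z = 0) :
    c * (E *ᵥ z ⬝ᵥ z) ≤ A *ᵥ z ⬝ᵥ z := by
  -- With `R = √E`, an eigenvector `w` of `R⁻¹ A R⁻¹` gives the eigenvector `R⁻¹ w` of the pencil.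
  set R := CFC.sqrt E
  have hR : R.IsHermitian := (nonneg_iff_posSemidef.1 (CFC.sqrt_nonneg E)).isHermitian
  have hRR : R * R = E := CFC.sqrt_mul_sqrt_self E hE.posSemidef.nonneg
  have hRdet : IsUnit R.det :=
    (isUnit_iff_isUnit_det R).1 ((CFC.isUnit_sqrt_iff E hE.posSemidef.nonneg).2 hE.isUnit)
  have hRinv : R * R⁻¹ = 1 := mul_nonsing_inv R hRdet
  have hinvR : R⁻¹ * R = 1 := nonsing_inv_mul R hRdet
  have hS : (R⁻¹ * A * R⁻¹).IsHermitian := by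
    simpa only [hR.inv.eq] using isHermitian_conjTranspose_mul_mul R⁻¹ hA
  have key := hS.mul_dotProduct_self_le (c := c) (v := R *ᵥ z) fun μ w hw hμ => by
    have hpencil : A *ᵥ (R⁻¹ *ᵥ w) = μ • E *ᵥ (R⁻¹ *ᵥ w) :=
      calc A *ᵥ (R⁻¹ *ᵥ w) = R *ᵥ ((R⁻¹ * A * R⁻¹) *ᵥ w) := by
            rw [mulVec_mulVec, mulVec_mulVec, ← Matrix.mul_assoc, ← Matrix.mul_assoc, hRinv,
              Matrix.one_mul]
        _ = μ • R *ᵥ w := by rw [hw, mulVec_smul]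
        _ = μ • E *ᵥ (R⁻¹ *ᵥ w) := by
            rw [← hRR, mulVec_mulVec, Matrix.mul_assoc, hRinv, Matrix.mul_one]
    have := hz μ _ hpencil hμ
    rwa [← hRR, mulVec_mulVec, Matrix.mul_assoc, hRinv, Matrix.mul_one,
      hR.mulVec_dotProduct] at this
  have hEz : R *ᵥ z ⬝ᵥ R *ᵥ z = E *ᵥ z ⬝ᵥ z := by
    rw [hR.mulVec_dotProduct, mulVec_mulVec, hRR, dotProduct_comm]
  have hAz : (R⁻¹ * A * R⁻¹) *ᵥ (R *ᵥ z) ⬝ᵥ R *ᵥ z = A *ᵥ z ⬝ᵥ z := by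
    rw [mulVec_mulVec, Matrix.mul_assoc, hinvR, Matrix.mul_one, ← mulVec_mulVec,
      hR.inv.mulVec_dotProduct, mulVec_mulVec, hinvR, one_mulVec]
  rwa [hEz, hAz] at key

/-- For `‖u‖_A = 1` this is `cos ∠_A(u, x)`. -/
noncomputable def cosA {n : ℕ} (A : Matrix (Fin n) (Fin n) ℝ) (u x : Fin n → ℝ) : ℝ :=
  ipA A u x / normA A x

section

variable {n : ℕ} {A E : Matrix (Fin n) (Fin n) ℝ}

theorem ipA_self_pos (hA : A.PosDef) {x : Fin n → ℝ} (hx : x ≠ 0) : 0 < ipA A x x := by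
  simpa [ipA, dotProduct_comm] using hA.dotProduct_mulVec_pos hx

theorem ipA_self_nonneg (hA : A.PosSemidef) (x : Fin n → ℝ) : 0 ≤ ipA A x x := by
  simpa [ipA, dotProduct_comm] using hA.dotProduct_mulVec_nonneg x

theorem normA_sq (hA : A.PosSemidef) (x : Fin n → ℝ) : normA A x ^ 2 = ipA A x x :=
  sq_sqrt (ipA_self_nonneg hA x)

theorem normA_pos (hA : A.PosDef) {x : Fin n → ℝ} (hx : x ≠ 0) : 0 < normA A x :=
  sqrt_pos.2 (ipA_self_pos hA hx)

theorem rayleigh_eq (x : Fin n → ℝ) : rayleigh A E x = ipA A x x / ipA E x x := rfl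

theorem rayleigh_pos (hA : A.PosDef) (hE : E.PosDef) {x : Fin n → ℝ} (hx : x ≠ 0) :
    0 < rayleigh A E x :=
  div_pos (ipA_self_pos hA hx) (ipA_self_pos hE hx)

theorem cosA_sq (hA : A.PosSemidef) (u y : Fin n → ℝ) :
    cosA A u y ^ 2 = ipA A u y ^ 2 / ipA A y y := by
  rw [cosA, div_pow, normA_sq hA]

theorem normA_sub_inv_smul {u y : Fin n → ℝ} (hA : A.PosDef) (hu : ipA A u u = 1)
    (hy : y ≠ 0) : normA A (u - (normA A y)⁻¹ • y) = √(2 - 2 * cosA A u y) := by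
  have hy2 := normA_sq hA.posSemidef y
  have hy0 := (normA_pos hA hy).ne'
  rw [normA, cosA]
  congr 1
  simp only [ipA, mulVec_sub, mulVec_smul, sub_dotProduct, dotProduct_sub, smul_dotProduct,
    dotProduct_smul, smul_eq_mul] at hu hy2 ⊢
  rw [hA.isHermitian.mulVec_dotProduct y u, dotProduct_comm y]
  field_simp
  linear_combination hu * normA A y ^ 2 - hy2

variable {lam1 lam2 : ℝ} {u1 : Fin n → ℝ}

theorem ipA_sub_smul_eq_zero (hu1A : ipA A u1 u1 = 1) (y : Fin n → ℝ) :
    ipA A u1 (y - ipA A u1 y • u1) = 0 := by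
  simp only [ipA, dotProduct_sub, dotProduct_smul, smul_eq_mul] at hu1A ⊢
  rw [hu1A, mul_one, sub_self]

theorem ipA_smul_add_self (hA : A.IsHermitian) (hu1A : ipA A u1 u1 = 1) (p : ℝ)
    {w : Fin n → ℝ} (hw : ipA A u1 w = 0) :
    ipA A (p • u1 + w) (p • u1 + w) = p ^ 2 + ipA A w w := by
  simp only [ipA, mulVec_add, mulVec_smul, add_dotProduct, dotProduct_add, smul_dotProduct,
    dotProduct_smul, smul_eq_mul] at hu1A hw ⊢
  rw [hA.mulVec_dotProduct w u1, dotProduct_comm w, hw, hu1A]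
  ring

theorem mul_ipA_smul_add_self (hE : E.IsHermitian) (hu1 : A *ᵥ u1 = lam1 • E *ᵥ u1)
    (hu1A : ipA A u1 u1 = 1) (p : ℝ) {w : Fin n → ℝ} (hw : ipA A u1 w = 0) :
    lam1 * ipA E (p • u1 + w) (p • u1 + w) = p ^ 2 + lam1 * ipA E w w := by
  simp only [ipA, hu1, smul_dotProduct, smul_eq_mul] at hu1A hw
  simp only [ipA, mulVec_add, mulVec_smul, add_dotProduct, dotProduct_add, smul_dotProduct,
    dotProduct_smul, smul_eq_mul]
  rw [hE.mulVec_dotProduct w u1, dotProduct_comm w]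
  linear_combination p ^ 2 * hu1A + 2 * p * hw

theorem exists_orthogonal_decomposition (hA : A.IsHermitian) (hE : E.IsHermitian)
    (hu1 : A *ᵥ u1 = lam1 • E *ᵥ u1) (hu1A : ipA A u1 u1 = 1) (y : Fin n → ℝ) :
    ∃ w, ipA A u1 w = 0 ∧ ipA A y y = ipA A u1 y ^ 2 + ipA A w w ∧
      lam1 * ipA E y y = ipA A u1 y ^ 2 + lam1 * ipA E w w := by
  have hw := ipA_sub_smul_eq_zero hu1A y
  set p := ipA A u1 y
  have hy : y = p • u1 + (y - p • u1) := (add_sub_cancel _ _).symm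
  refine ⟨_, hw, ?_, ?_⟩ <;> conv_lhs => rw [hy]
  · exact ipA_smul_add_self hA hu1A p hw
  · exact mul_ipA_smul_add_self hE hu1 hu1A p hw

theorem lam2_mul_le_of_ipA_eq_zero (hA : A.IsHermitian) (hE : E.PosDef)
    (hu1 : A *ᵥ u1 = lam1 • E *ᵥ u1) (h1 : lam1 ≠ 0)
    (hsimple : ∀ v : Fin n → ℝ, A.mulVec v = lam1 • E.mulVec v → ∃ c : ℝ, v = c • u1)
    (hmin : ∀ μ : ℝ, (∃ v : Fin n → ℝ, v ≠ 0 ∧ A.mulVec v = μ • E.mulVec v) →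
      μ = lam1 ∨ lam2 ≤ μ)
    {z : Fin n → ℝ} (hz : ipA A u1 z = 0) : lam2 * ipA E z z ≤ ipA A z z := by
  refine hA.mul_dotProduct_mulVec_le_of_posDef hE fun μ v hv hμ => ?_
  obtain rfl | hv0 := eq_or_ne v 0
  · simp
  have hμ1 : μ = lam1 := (hmin μ ⟨v, hv0, hv⟩).resolve_right (not_le.2 hμ)
  obtain ⟨c, rfl⟩ := hsimple _ (hμ1 ▸ hv)
  have hEu1 : lam1 * (E *ᵥ u1 ⬝ᵥ z) = 0 := by
    rwa [← smul_eq_mul, ← smul_dotProduct, ← hu1]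
  rw [mulVec_smul, smul_dotProduct, (mul_eq_zero.1 hEu1).resolve_left h1, smul_zero]

theorem cosA_sq_le_one (hA : A.PosDef) (hu1A : ipA A u1 u1 = 1) {y : Fin n → ℝ}
    (hy : y ≠ 0) : cosA A u1 y ^ 2 ≤ 1 := by
  have hw := ipA_sub_smul_eq_zero hu1A y
  have ha := ipA_smul_add_self hA.isHermitian hu1A (ipA A u1 y) hw
  rw [add_sub_cancel] at ha
  rw [cosA_sq hA.posSemidef, div_le_one (ipA_self_pos hA hy), ha]
  linarith [ipA_self_nonneg hA.posSemidef (y - ipA A u1 y • u1)]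

theorem cosA_sq_le_div_rayleigh (hA : A.PosDef) (hE : E.PosDef)
    (hu1 : A *ᵥ u1 = lam1 • E *ᵥ u1) (hu1A : ipA A u1 u1 = 1) (h1 : 0 ≤ lam1)
    {x : Fin n → ℝ} (hx : x ≠ 0) : cosA A u1 x ^ 2 ≤ lam1 / rayleigh A E x := by
  obtain ⟨w, -, -, he⟩ :=
    exists_orthogonal_decomposition hA.isHermitian hE.isHermitian hu1 hu1A x
  rw [cosA_sq hA.posSemidef, rayleigh_eq, div_div_eq_mul_div]
  refine div_le_div_of_nonneg_right ?_ (ipA_self_pos hA hx).le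
  nlinarith [mul_nonneg h1 (ipA_self_nonneg hE.posSemidef w)]

theorem one_sub_cosA_sq_div_cosA_sq_le (hA : A.PosDef) (hE : E.PosDef)
    (hu1 : A *ᵥ u1 = lam1 • E *ᵥ u1) (hu1A : ipA A u1 u1 = 1) (h1 : 0 < lam1)
    (hsimple : ∀ v : Fin n → ℝ, A.mulVec v = lam1 • E.mulVec v → ∃ c : ℝ, v = c • u1)
    (hmin : ∀ μ : ℝ, (∃ v : Fin n → ℝ, v ≠ 0 ∧ A.mulVec v = μ • E.mulVec v) →
      μ = lam1 ∨ lam2 ≤ μ)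
    {y : Fin n → ℝ} (hy : y ≠ 0) (hp : 0 < ipA A u1 y) (hly : rayleigh A E y < lam2) :
    (1 - cosA A u1 y ^ 2) / cosA A u1 y ^ 2 ≤
      lam2 / lam1 * ((rayleigh A E y - lam1) / (lam2 - rayleigh A E y)) := by
  obtain ⟨w, hw, ha, he⟩ :=
    exists_orthogonal_decomposition hA.isHermitian hE.isHermitian hu1 hu1A y
  have hgap := lam2_mul_le_of_ipA_eq_zero hA.isHermitian hE hu1 h1.ne' hsimple hmin hw
  have hay := ipA_self_pos hA hy
  have hey := ipA_self_pos hE hy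
  rw [rayleigh_eq, div_lt_iff₀ hey] at hly
  rw [cosA_sq hA.posSemidef, rayleigh_eq]
  set p := ipA A u1 y
  have hp2 : 0 < p ^ 2 := by positivity
  have hlhs : (1 - p ^ 2 / ipA A y y) / (p ^ 2 / ipA A y y) = (ipA A y y - p ^ 2) / p ^ 2 := by
    field_simp
  have hrhs : lam2 / lam1 * ((ipA A y y / ipA E y y - lam1) / (lam2 - ipA A y y / ipA E y y)) =
      lam2 * (ipA A y y - lam1 * ipA E y y) / (lam1 * (lam2 * ipA E y y - ipA A y y)) := by
    field_simp
  rw [hlhs, hrhs, div_le_div_iff₀ hp2 (by nlinarith)]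
  have key : lam2 * (ipA A y y - lam1 * ipA E y y) * p ^ 2 -
      (ipA A y y - p ^ 2) * (lam1 * (lam2 * ipA E y y - ipA A y y)) =
      lam1 * (ipA A w w - lam2 * ipA E w w) * (p ^ 2 + ipA A w w) := by
    linear_combination (lam2 * p ^ 2 - lam2 * (lam1 * ipA E y y) +
      lam1 * (ipA A y y + p ^ 2 + ipA A w w) - lam1 * p ^ 2) * ha -
      lam2 * (p ^ 2 + ipA A w w) * he
  nlinarith [mul_nonneg (mul_nonneg h1.le (sub_nonneg.2 hgap))
    (add_nonneg hp2.le (ipA_self_nonneg hA.posSemidef w))]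

end

theorem eigenvalue_reduction_implies_eigenvector_reduction_general
    {n : ℕ}
    (A E : Matrix (Fin n) (Fin n) ℝ) (hA : A.PosDef) (hE : E.PosDef)
    (lam1 lam2 : ℝ) (u1 : Fin n → ℝ)
    (hu1 : A.mulVec u1 = lam1 • E.mulVec u1) (hu1norm : normA A u1 = 1)
    (h1pos : 0 < lam1) (h12 : lam1 < lam2)
    (hsimple : ∀ v : Fin n → ℝ, A.mulVec v = lam1 • E.mulVec v → ∃ c : ℝ, v = c • u1)
    (hmin : ∀ μ : ℝ, (∃ v : Fin n → ℝ, v ≠ 0 ∧ A.mulVec v = μ • E.mulVec v) →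
      μ = lam1 ∨ lam2 ≤ μ)
    (δ : ℝ) (hδ : δ ≥ lam2 / (lam2 - lam1))
    (x : Fin n → ℝ) (hx : x ≠ 0)
    (hrayx : lam1 / rayleigh A E x ≥ 1 - 1 / (2 * δ ^ 2)) :
    rayleigh A E x < lam2 ∧
      ∀ u : ℝ, u ≥ 1 →
        ∀ y : Fin n → ℝ, y ≠ 0 → 0 < ipA A u1 y → rayleigh A E y < lam2 →
          (rayleigh A E y - lam1) / (lam2 - rayleigh A E y) ≤
            (1 / (4 * u ^ 2 * δ - 1)) *
              ((rayleigh A E x - lam1) / (lam2 - rayleigh A E x)) →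
          normA A (u1 - (normA A y)⁻¹ • y) ≤ (1 / u) * Real.sin (angleA A u1 x) := by
  have hu1A : ipA A u1 u1 = 1 := by rw [← normA_sq hA.posSemidef, hu1norm, one_pow]
  have hlx := rayleigh_pos hA hE hx
  refine ⟨(lt_and_mul_div_le_of_one_sub_le_div h1pos h12 hδ hlx hrayx).1,
    fun u hu y hy hpy hly hq => ?_⟩
  have hcx := cosA_sq_le_one hA hu1A hx
  rw [normA_sub_inv_smul hA hu1A hy, angleA, hu1norm, one_mul, sin_arccos]
  exact sqrt_two_sub_two_mul_le h1pos h12 (one_lt_of_div_sub_le h1pos h12 hδ).le hu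
    (div_pos hpy (normA_pos hA hy)) hcx
    (one_sub_cosA_sq_div_cosA_sq_le hA hE hu1 hu1A h1pos hsimple hmin hy hpy hly) hq
    (div_mul_div_le_mul_one_sub_sq h1pos h12 hδ hlx hrayx
      (cosA_sq_le_div_rayleigh hA hE hu1 hu1A h1pos.le hx) hcx)

/-- Lemma `rankoptaprior`: eigenvalue improvement implies eigenvector improvement. -/
theorem eigenvalue_reduction_implies_eigenvector_reduction
    {n : ℕ} (hn : 1 ≤ n)
    (A E : Matrix (Fin n) (Fin n) ℝ) (hA : A.PosDef) (hE : E.PosDef)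
    (lam1 lam2 : ℝ) (u1 : Fin n → ℝ)
    (hu1 : A.mulVec u1 = lam1 • E.mulVec u1) (hu1ne : u1 ≠ 0) (hu1norm : normA A u1 = 1)
    (h1pos : 0 < lam1) (h12 : lam1 < lam2)
    (hsimple : ∀ v : Fin n → ℝ, A.mulVec v = lam1 • E.mulVec v → ∃ c : ℝ, v = c • u1)
    (hlam2 : ∃ v : Fin n → ℝ, v ≠ 0 ∧ A.mulVec v = lam2 • E.mulVec v)
    (hmin : ∀ μ : ℝ, (∃ v : Fin n → ℝ, v ≠ 0 ∧ A.mulVec v = μ • E.mulVec v) →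
      μ = lam1 ∨ lam2 ≤ μ)
    (δ : ℝ) (hδ : δ ≥ lam2 / (lam2 - lam1))
    (x : Fin n → ℝ) (hx : x ≠ 0)
    (hrayx : lam1 / rayleigh A E x ≥ 1 - 1 / (2 * δ ^ 2)) :
    rayleigh A E x < lam2 ∧
      ∀ u : ℝ, u ≥ 1 →
        ∀ y : Fin n → ℝ, y ≠ 0 → 0 < ipA A u1 y → rayleigh A E y < lam2 →
          (rayleigh A E y - lam1) / (lam2 - rayleigh A E y) ≤
            (1 / (4 * u ^ 2 * δ - 1)) *
              ((rayleigh A E x - lam1) / (lam2 - rayleigh A E x)) →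
          normA A (u1 - (normA A y)⁻¹ • y) ≤ (1 / u) * Real.sin (angleA A u1 x) :=
  eigenvalue_reduction_implies_eigenvector_reduction_general A E hA hE lam1 lam2 u1 hu1 hu1norm
    h1pos h12 hsimple hmin δ hδ x hx hrayx
end
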